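/- Let A = {H_1,…,H_n} be a central hyperplane arrangement in Q^l with primitive integer defining forms. Let p be a prime that is good for A, does not divide n, and is a non-zero divisor on Z[x_1,…,x_l]/J(A)_Z. If A_p is free in F_p^l with exponents (e_1,…,e_l), then A is free in Q^l with exponents (e_1,…,e_l). -/

import Mathlib

/-!
Let `Q = ∏ α_i`. A lift `θ` over `ℤ` of a logarithmic vector field of `A_p` satisfies
`θ(Q) - g Q = p h` for some `g, h`; since `p` is a non-zero divisor modulo `J(A)_ℤ`,
`h = a Q + Σ_j c_j ∂_j Q`, and then `Q ∣ (θ - p c)(Q)` exactly. Over `ℚ`, where the `α_i` are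
pairwise non-associated primes, such a field is logarithmic, and so are its homogeneous
components. Lifting a homogeneous basis of `D(A_p)` in this way gives fields in `D(A)` of degrees
`e_i` whose determinant reduces modulo `p` to the (nonzero) determinant of that basis. By the
necessity part of Saito's criterion `Σ e_i = n` for the free arrangement `A_p`, so Saito's
criterion over `ℚ` shows that the lifted fields form a basis of `D(A)`.
-/

open MvPolynomial

namespace HApaper

variable {K : Type*} [CommRing K] {l n : ℕ}

/-- The data of a central arrangement of `n` hyperplanes in `K^l`: `n` nonzero
homogeneous linear forms defining pairwise distinct hyperplanes. -/
structure IsCentralArrangement (α : Fin n → MvPolynomial (Fin l) K) : Prop where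
  homog : ∀ i, (α i).IsHomogeneous 1
  nonzero : ∀ i, α i ≠ 0
  distinct : ∀ i j, i ≠ j → ∀ c : K, α i ≠ c • α j

/-- The defining polynomial `Q(A) = α_1 ⋯ α_n`. -/
noncomputable def defPoly (α : Fin n → MvPolynomial (Fin l) K) : MvPolynomial (Fin l) K :=
  ∏ i, α i

/-- A polynomial vector field `δ = Σ_j f_j ∂/∂x_j` (encoded by its coefficient tuple
`(f_1, …, f_l)`) applied to a polynomial `g`, giving `Σ_j f_j ∂g/∂x_j`. -/
noncomputable def derApply (δ : Fin l → MvPolynomial (Fin l) K) (g : MvPolynomial (Fin l) K) :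
    MvPolynomial (Fin l) K :=
  ∑ j, δ j * MvPolynomial.pderiv j g

lemma derApply_add (δ₁ δ₂ : Fin l → MvPolynomial (Fin l) K) (g : MvPolynomial (Fin l) K) :
    derApply (δ₁ + δ₂) g = derApply δ₁ g + derApply δ₂ g := by
  simp [derApply, add_mul, Finset.sum_add_distrib]

lemma derApply_smul (c : MvPolynomial (Fin l) K) (δ : Fin l → MvPolynomial (Fin l) K)
    (g : MvPolynomial (Fin l) K) : derApply (c • δ) g = c * derApply δ g := by
  simp [derApply, Finset.mul_sum, mul_assoc]

/-- The module `D(A) = {δ ∈ Der | δ(α_i) ∈ (α_i)S for all i}` of logarithmic vector fields. -/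
noncomputable def logDer (α : Fin n → MvPolynomial (Fin l) K) :
    Submodule (MvPolynomial (Fin l) K) (Fin l → MvPolynomial (Fin l) K) where
  carrier := {δ | ∀ i, α i ∣ derApply δ (α i)}
  add_mem' := by
    intro a b ha hb i
    rw [derApply_add]
    exact dvd_add (ha i) (hb i)
  zero_mem' := by
    intro i
    simp [derApply]
  smul_mem' := by
    intro c δ hδ i
    rw [derApply_smul]
    exact Dvd.dvd.mul_left (hδ i) c

/-- A vector field is homogeneous of polynomial degree `d` if all its coefficients are
homogeneous polynomials of degree `d`. -/
def IsHomogVF (δ : Fin l → MvPolynomial (Fin l) K) (d : ℕ) : Prop :=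
  ∀ j, (δ j).IsHomogeneous d

/-- `A` is free with exponents `(e_1, …, e_l)` if `D(A)` has a basis of homogeneous
vector fields of polynomial degrees `e_1, …, e_l`. -/
def IsFreeWithExponents (α : Fin n → MvPolynomial (Fin l) K) (e : Fin l → ℕ) : Prop :=
  ∃ b : Module.Basis (Fin l) (MvPolynomial (Fin l) K) (logDer α),
    ∀ i, IsHomogVF ((b i : Fin l → MvPolynomial (Fin l) K)) (e i)

/-- `A` is free if `D(A)` is a free module over the polynomial ring. -/
def IsFree (α : Fin n → MvPolynomial (Fin l) K) : Prop :=
  Module.Free (MvPolynomial (Fin l) K) (logDer α)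

/-- A central arrangement in `ℚ^l` presented by primitive integer defining forms:
`n` nonzero homogeneous integral linear forms, each with no prime dividing all of its
coefficients, defining pairwise distinct hyperplanes of `ℚ^l`. -/
structure IsIntegralArrangement (α : Fin n → MvPolynomial (Fin l) ℤ) : Prop where
  homog : ∀ i, (α i).IsHomogeneous 1
  nonzero : ∀ i, α i ≠ 0
  primitive : ∀ i (p : ℕ), p.Prime → ∃ m, ¬ ((p : ℤ) ∣ MvPolynomial.coeff m (α i))
  distinct : ∀ i j, i ≠ j → ∀ c : ℚ,
    MvPolynomial.map (Int.castRingHom ℚ) (α i) ≠ c • MvPolynomial.map (Int.castRingHom ℚ) (α j)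

/-- Reduction modulo `p` of an integral polynomial, `π_p`. -/
noncomputable def modP (p : ℕ) (f : MvPolynomial (Fin l) ℤ) : MvPolynomial (Fin l) (ZMod p) :=
  MvPolynomial.map (Int.castRingHom (ZMod p)) f

/-- A prime `p` is good for `A` if `π_p(Q(A))` is reduced (squarefree). -/
def IsGoodPrime (α : Fin n → MvPolynomial (Fin l) ℤ) (p : ℕ) : Prop :=
  p.Prime ∧ Squarefree (modP p (defPoly α))

/-- The Jacobian ideal `J(A)_ℤ ⊆ ℤ[x_1,…,x_l]`, generated by `Q(A)` and its partial
derivatives. -/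
noncomputable def jacobianIdealZ (α : Fin n → MvPolynomial (Fin l) ℤ) :
    Ideal (MvPolynomial (Fin l) ℤ) :=
  Ideal.span ({defPoly α} ∪ Set.range fun j => MvPolynomial.pderiv j (defPoly α))

section LinearForm

variable {σ R : Type*} [CommSemiring R]

theorem _root_.MvPolynomial.IsHomogeneous.exists_eq_sum_C_mul_X [Fintype σ]
    {φ : MvPolynomial σ R} (hφ : φ.IsHomogeneous 1) :
    ∃ c : σ → R, φ = ∑ j, C (c j) * X j := by
  have hmem := (mem_homogeneousSubmodule 1 φ).mpr hφ
  rw [homogeneousSubmodule_one_eq_span_X, Submodule.mem_span_range_iff_exists_fun] at hmem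
  obtain ⟨c, hc⟩ := hmem
  exact ⟨c, by simp_rw [← hc, smul_eq_C_mul]⟩

theorem _root_.MvPolynomial.IsHomogeneous.exists_ne_zero_eq_sum_C_mul_X [Fintype σ]
    {φ : MvPolynomial σ R} (hφ : φ.IsHomogeneous 1) (h0 : φ ≠ 0) :
    ∃ c : σ → R, (∃ j₀, c j₀ ≠ 0) ∧ φ = ∑ j, C (c j) * X j := by
  obtain ⟨c, hc⟩ := hφ.exists_eq_sum_C_mul_X
  refine ⟨c, ?_, hc⟩
  by_contra! h
  exact h0 (by simp [hc, h])

theorem pderiv_sum_C_mul_X [Fintype σ] (c : σ → R) (j : σ) :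
    pderiv j (∑ i, C (c i) * X i) = C (c j) := by
  classical
  simp [pderiv_X, Pi.single_apply]

end LinearForm

theorem prime_of_isHomogeneous_one {σ F : Type*} [Field F] {φ : MvPolynomial σ F}
    (hφ : φ.IsHomogeneous 1) (h0 : φ ≠ 0) : Prime φ := by
  refine (irreducible_of_totalDegree_eq_one (hφ.totalDegree h0) fun x hx => ?_).prime
  obtain ⟨d, hd⟩ := ne_zero_iff.mp h0
  exact (ne_zero_of_dvd_ne_zero hd (hx d)).isUnit

theorem derApply_mul (δ : Fin l → MvPolynomial (Fin l) K) (f g : MvPolynomial (Fin l) K) :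
    derApply δ (f * g) = derApply δ f * g + f * derApply δ g := by
  simp only [derApply, pderiv_mul, Finset.sum_mul, Finset.mul_sum, ← Finset.sum_add_distrib]
  exact Finset.sum_congr rfl fun j _ => by ring

theorem derApply_sub (δ₁ δ₂ : Fin l → MvPolynomial (Fin l) K) (g : MvPolynomial (Fin l) K) :
    derApply (δ₁ - δ₂) g = derApply δ₁ g - derApply δ₂ g := by
  simp [derApply, sub_mul, Finset.sum_sub_distrib]

theorem derApply_single (j : Fin l) (f g : MvPolynomial (Fin l) K) :
    derApply (Pi.single j f) g = f * pderiv j g := by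
  classical
  simp [derApply, Pi.single_apply]

theorem derApply_sum_C_mul_X (δ : Fin l → MvPolynomial (Fin l) K) (c : Fin l → K) :
    derApply δ (∑ i, C (c i) * X i) = ∑ j, δ j * C (c j) := by
  simp only [derApply, pderiv_sum_C_mul_X]

theorem derApply_map {K' : Type*} [CommRing K'] (f : K →+* K')
    (δ : Fin l → MvPolynomial (Fin l) K) (g : MvPolynomial (Fin l) K) :
    derApply (fun j => map f (δ j)) (map f g) = map f (derApply δ g) := by
  simp [derApply, pderiv_map]

theorem defPoly_map {K' : Type*} [CommRing K'] (f : K →+* K')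
    (α : Fin n → MvPolynomial (Fin l) K) :
    defPoly (fun i => map f (α i)) = map f (defPoly α) := by
  simp [defPoly]

theorem defPoly_dvd_derApply {α : Fin n → MvPolynomial (Fin l) K}
    {δ : Fin l → MvPolynomial (Fin l) K} (hδ : δ ∈ logDer α) :
    defPoly α ∣ derApply δ (defPoly α) := by
  refine Finset.prod_induction _ (fun g => g ∣ derApply δ g) (fun f g hf hg => ?_) ?_
    fun i _ => hδ i
  · rw [derApply_mul]
    exact dvd_add (mul_dvd_mul_right hf g) (mul_dvd_mul_left f hg)
  · simp [derApply]

theorem prod_erase_smul_mem_logDer {α : Fin n → MvPolynomial (Fin l) K} (k : Fin n)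
    {δ : Fin l → MvPolynomial (Fin l) K} (hδ : α k ∣ derApply δ (α k)) :
    (∏ i ∈ Finset.univ.erase k, α i) • δ ∈ logDer α := by
  intro i
  rw [derApply_smul]
  by_cases hik : i = k
  · subst hik
    exact dvd_mul_of_dvd_right hδ _
  · exact dvd_mul_of_dvd_left
      (Finset.dvd_prod_of_mem α (Finset.mem_erase.mpr ⟨hik, Finset.mem_univ i⟩)) _

section Graded

attribute [local instance] MvPolynomial.gradedAlgebra

theorem dvd_homogeneousComponent {σ R : Type*} [CommSemiring R] {f g : MvPolynomial σ R} {m : ℕ}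
    (hf : f.IsHomogeneous m) (h : f ∣ g) (d : ℕ) : f ∣ homogeneousComponent d g := by
  have hI : (Ideal.span {f}).IsHomogeneous (homogeneousSubmodule σ R) :=
    Ideal.homogeneous_span _ _ fun x hx => ⟨m, (Set.mem_singleton_iff.mp hx) ▸ hf⟩
  exact Ideal.mem_span_singleton.mp
    (homogeneousComponent_mem_of_mem hI (Ideal.mem_span_singleton.mpr h) d)

end Graded

theorem homogeneousComponent_map {σ R R' : Type*} [CommSemiring R] [CommSemiring R']
    (f : R →+* R') (d : ℕ) (g : MvPolynomial σ R) :
    homogeneousComponent d (map f g) = map f (homogeneousComponent d g) := by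
  ext s
  simp only [coeff_homogeneousComponent, coeff_map]
  split_ifs <;> simp

theorem homogeneousComponent_mem_logDer {α : Fin n → MvPolynomial (Fin l) K}
    (hα : ∀ i, (α i).IsHomogeneous 1) {δ : Fin l → MvPolynomial (Fin l) K}
    (hδ : δ ∈ logDer α) (d : ℕ) :
    (fun j => homogeneousComponent d (δ j)) ∈ logDer α := by
  intro i
  obtain ⟨c, hc⟩ := (hα i).exists_eq_sum_C_mul_X
  have hcomm : derApply (fun j => homogeneousComponent d (δ j)) (α i) =
      homogeneousComponent d (derApply δ (α i)) := by
    simp [hc, derApply_sum_C_mul_X, mul_comm _ (C _), homogeneousComponent_C_mul]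
  rw [hcomm]
  exact dvd_homogeneousComponent (hα i) (hδ i) d

theorem isHomogeneous_det {ι σ R : Type*} [Fintype ι] [DecidableEq ι] [CommRing R]
    (M : Matrix ι ι (MvPolynomial σ R)) (e : ι → ℕ)
    (hM : ∀ i j, (M i j).IsHomogeneous (e i)) : M.det.IsHomogeneous (∑ i, e i) := by
  rw [Matrix.det_apply]
  refine IsHomogeneous.sum _ _ _ fun τ _ => ?_
  have hprod : (∏ i, M (τ i) i).IsHomogeneous (∑ i, e i) := by
    rw [← Equiv.sum_comp τ e]
    exact IsHomogeneous.prod _ _ _ fun i _ => hM (τ i) i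
  rcases Int.units_eq_one_or (Equiv.Perm.sign τ) with h | h <;> simp [h, hprod, hprod.neg]

theorem det_dvd_det_of_rows_mem {ι R : Type*} [Fintype ι] [DecidableEq ι] [CommRing R]
    {W : Submodule R (ι → R)} (b : Module.Basis ι R W) (N : Matrix ι ι R)
    (hN : ∀ t, N t ∈ W) :
    (Matrix.of fun i => (b i : ι → R)).det ∣ N.det := by
  have hfactor :
      N = Matrix.of (fun t => b.repr ⟨N t, hN t⟩) * Matrix.of fun i => (b i : ι → R) := by
    ext t s
    have := congrArg (fun w : W => (w : ι → R) s) (b.sum_repr ⟨N t, hN t⟩)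
    simp only [Submodule.coe_sum, Submodule.coe_smul, Finset.sum_apply, Pi.smul_apply,
      smul_eq_mul] at this
    simp [Matrix.mul_apply, this]
  rw [hfactor, Matrix.det_mul]
  exact dvd_mul_left _ _

theorem det_pivotMatrix {R : Type*} [CommRing R] {m : ℕ} (j₀ : Fin (m + 1)) (a b : R)
    (v : Fin (m + 1) → R) :
    (Matrix.of fun t =>
      if t = j₀ then Pi.single j₀ a else Pi.single t b + Pi.single j₀ (v t)).det =
      a * b ^ m := by
  set M : Matrix (Fin (m + 1)) (Fin (m + 1)) R :=
    Matrix.of fun t => if t = j₀ then Pi.single j₀ a else Pi.single t b + Pi.single j₀ (v t)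
  have hminor : M.submatrix j₀.succAbove j₀.succAbove = Matrix.diagonal fun _ => b := by
    ext i j
    simp [M, Pi.single_apply, Matrix.diagonal_apply, eq_comm]
  rw [Matrix.det_succ_row _ j₀, Finset.sum_eq_single j₀]
  · simp [M, hminor]
  · intro j _ hj
    simp [M, hj]
  · simp

theorem isHomogeneous_defPoly {α : Fin n → MvPolynomial (Fin l) K}
    (hα : ∀ i, (α i).IsHomogeneous 1) : (defPoly α).IsHomogeneous n := by
  simpa [defPoly] using IsHomogeneous.prod Finset.univ α (fun _ => 1) fun i _ => hα i

theorem det_basis_dvd_defPoly_pow {α : Fin n → MvPolynomial (Fin l) K}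
    (b : Module.Basis (Fin l) (MvPolynomial (Fin l) K) (logDer α)) :
    (Matrix.of fun i => (b i : Fin l → MvPolynomial (Fin l) K)).det ∣ defPoly α ^ l := by
  have hrows : ∀ t, (defPoly α • (1 : Matrix (Fin l) (Fin l) (MvPolynomial (Fin l) K))) t ∈
      logDer α := by
    intro t i
    change α i ∣
      derApply (defPoly α • (1 : Matrix (Fin l) (Fin l) (MvPolynomial (Fin l) K)) t) (α i)
    rw [derApply_smul]
    exact dvd_mul_of_dvd_left (Finset.dvd_prod_of_mem α (Finset.mem_univ i)) _
  simpa [Matrix.det_smul] using det_dvd_det_of_rows_mem b _ hrows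

namespace IsCentralArrangement

variable {F : Type*} [Field F] {α : Fin n → MvPolynomial (Fin l) F}

theorem defPoly_ne_zero (hA : IsCentralArrangement α) : defPoly α ≠ 0 :=
  Finset.prod_ne_zero_iff.mpr fun i _ => hA.nonzero i

theorem prime (hA : IsCentralArrangement α) (i : Fin n) : Prime (α i) :=
  prime_of_isHomogeneous_one (hA.homog i) (hA.nonzero i)

theorem not_dvd (hA : IsCentralArrangement α) {i j : Fin n} (hij : i ≠ j) :
    ¬ α i ∣ α j := by
  rintro ⟨u, hu⟩
  have hu0 : u ≠ 0 := by rintro rfl; exact hA.nonzero j (by simpa using hu)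
  have hdeg : u.totalDegree = 0 := by
    have := congrArg totalDegree hu
    rw [totalDegree_mul_of_isDomain (hA.nonzero i) hu0, (hA.homog j).totalDegree (hA.nonzero j),
      (hA.homog i).totalDegree (hA.nonzero i)] at this
    omega
  refine hA.distinct j i hij.symm (coeff 0 u) ?_
  rw [hu, smul_eq_C_mul, ← totalDegree_eq_zero_iff_eq_C.mp hdeg, mul_comm]

theorem defPoly_dvd (hA : IsCentralArrangement α) {f : MvPolynomial (Fin l) F}
    (h : ∀ i, α i ∣ f) : defPoly α ∣ f :=
  Finset.prod_dvd_of_isRelPrime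
    (fun i _ _ _ hij => (hA.prime i).irreducible.isRelPrime_iff_not_dvd.mpr (hA.not_dvd hij))
    fun i _ => h i

theorem not_dvd_prod_erase (hA : IsCentralArrangement α) (i : Fin n) :
    ¬ α i ∣ ∏ k ∈ Finset.univ.erase i, α k := by
  rw [(hA.prime i).dvd_finsetProd_iff]
  rintro ⟨k, hk, hdvd⟩
  exact hA.not_dvd (Finset.ne_of_mem_erase hk).symm hdvd

theorem mem_logDer_of_dvd (hA : IsCentralArrangement α) {δ : Fin l → MvPolynomial (Fin l) F}
    (h : defPoly α ∣ derApply δ (defPoly α)) : δ ∈ logDer α := by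
  intro i
  have hQ : defPoly α = α i * ∏ k ∈ Finset.univ.erase i, α k :=
    (Finset.mul_prod_erase _ _ (Finset.mem_univ i)).symm
  have hdvd : α i ∣ derApply δ (α i) * ∏ k ∈ Finset.univ.erase i, α k := by
    have := (Dvd.intro _ hQ.symm).trans h
    rw [hQ, derApply_mul] at this
    exact (dvd_add_left (dvd_mul_right _ _)).mp this
  exact ((hA.prime i).dvd_or_dvd hdvd).resolve_right (hA.not_dvd_prod_erase i)

theorem not_dvd_C (hA : IsCentralArrangement α) (k : Fin n) {r : F} (hr : r ≠ 0) :
    ¬ α k ∣ C r :=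
  fun h => (hA.prime k).not_isUnit (isUnit_of_dvd_unit h ((isUnit_iff_ne_zero.mpr hr).map C))

theorem dvd_det (hA : IsCentralArrangement α) (N : Matrix (Fin l) (Fin l) (MvPolynomial (Fin l) F))
    (hN : ∀ t, N t ∈ logDer α) (k : Fin n) : α k ∣ N.det := by
  obtain ⟨c, ⟨j₀, hj₀⟩, hc⟩ := (hA.homog k).exists_ne_zero_eq_sum_C_mul_X (hA.nonzero k)
  have hrow : N.mulVec (fun j => C (c j)) = fun t => derApply (N t) (α k) := by
    ext t
    simp [hc, derApply_sum_C_mul_X, Matrix.mulVec, dotProduct]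
  have hadj := congrFun (congrArg N.adjugate.mulVec hrow) j₀
  rw [Matrix.mulVec_mulVec, Matrix.adjugate_mul, Matrix.smul_mulVec, Matrix.one_mulVec] at hadj
  have hdvd : α k ∣ N.det * C (c j₀) := by
    simp only [Pi.smul_apply, smul_eq_mul, Matrix.mulVec, dotProduct] at hadj
    rw [hadj]
    exact Finset.dvd_sum fun t _ => dvd_mul_of_dvd_right (hN t k) _
  exact ((hA.prime k).dvd_or_dvd hdvd).resolve_right (hA.not_dvd_C k hj₀)

theorem defPoly_dvd_det (hA : IsCentralArrangement α)
    (N : Matrix (Fin l) (Fin l) (MvPolynomial (Fin l) F)) (hN : ∀ t, N t ∈ logDer α) :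
    defPoly α ∣ N.det :=
  hA.defPoly_dvd (hA.dvd_det N hN)

/- The rows of `P • Θ` lie in `D(A)`: those of `Θ` other than the `j₀`-th kill `α k`, and
`P = ∏_{i ≠ k} α i`. Their determinant `P ^ l * α k * c j₀ ^ (l - 1)` is divisible by `α k`
only once, while it is a multiple of the determinant of the basis. -/
theorem sq_not_dvd_det_basis (hA : IsCentralArrangement α)
    (b : Module.Basis (Fin l) (MvPolynomial (Fin l) F) (logDer α)) (k : Fin n) :
    ¬ α k ^ 2 ∣ (Matrix.of fun i => (b i : Fin l → MvPolynomial (Fin l) F)).det := by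
  obtain ⟨c, ⟨j₀, hj₀⟩, hc⟩ := (hA.homog k).exists_ne_zero_eq_sum_C_mul_X (hA.nonzero k)
  obtain ⟨m, rfl⟩ : ∃ m, l = m + 1 := ⟨l - 1, by have := j₀.pos; omega⟩
  set P := ∏ i ∈ Finset.univ.erase k, α i
  set Θ : Matrix (Fin (m + 1)) (Fin (m + 1)) (MvPolynomial (Fin (m + 1)) F) := Matrix.of fun t =>
    if t = j₀ then Pi.single j₀ (α k) else Pi.single t (C (c j₀)) + Pi.single j₀ (-C (c t))
  have hrows : ∀ t, (P • Θ) t ∈ logDer α := by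
    intro t
    refine prod_erase_smul_mem_logDer k ?_
    change α k ∣ derApply (if t = j₀ then _ else _) (α k)
    split_ifs with ht
    · simp [derApply_single]
    · rw [derApply_add, derApply_single, derApply_single, hc, pderiv_sum_C_mul_X,
        pderiv_sum_C_mul_X, neg_mul, mul_comm, add_neg_cancel]
      exact dvd_zero _
  have hdet : (P • Θ).det = P ^ (m + 1) * (α k * C (c j₀) ^ m) := by
    rw [Matrix.det_smul, det_pivotMatrix, Fintype.card_fin]
  intro hsq
  have hsq' : α k * α k ∣ α k * (P ^ (m + 1) * C (c j₀) ^ m) := by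
    have := hsq.trans ((det_dvd_det_of_rows_mem b _ hrows).trans hdet.dvd)
    rwa [sq, mul_left_comm] at this
  rcases (hA.prime k).dvd_or_dvd ((mul_dvd_mul_iff_left (hA.nonzero k)).mp hsq') with h | h
  · exact hA.not_dvd_prod_erase k ((hA.prime k).dvd_of_dvd_pow h)
  · exact hA.not_dvd_C k (pow_ne_zero m hj₀) (by rwa [← C_pow] at h)

theorem det_basis_ne_zero (hA : IsCentralArrangement α)
    (b : Module.Basis (Fin l) (MvPolynomial (Fin l) F) (logDer α)) :
    (Matrix.of fun i => (b i : Fin l → MvPolynomial (Fin l) F)).det ≠ 0 :=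
  fun h => pow_ne_zero l hA.defPoly_ne_zero (zero_dvd_iff.mp (h ▸ det_basis_dvd_defPoly_pow b))

theorem isUnit_of_det_basis_eq (hA : IsCentralArrangement α)
    (b : Module.Basis (Fin l) (MvPolynomial (Fin l) F) (logDer α)) {h : MvPolynomial (Fin l) F}
    (hh : (Matrix.of fun i => (b i : Fin l → MvPolynomial (Fin l) F)).det = defPoly α * h) :
    IsUnit h := by
  have h0 : h ≠ 0 := right_ne_zero_of_mul (hh ▸ hA.det_basis_ne_zero b)
  by_contra hnu
  obtain ⟨q, hq, hqh⟩ := WfDvdMonoid.exists_irreducible_factor hnu h0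
  have hqQ : q ∣ ∏ i, α i ^ l := by
    rw [Finset.prod_pow]
    exact (hqh.trans (Dvd.intro_left _ hh.symm)).trans (det_basis_dvd_defPoly_pow b)
  obtain ⟨k, -, hk⟩ := hq.prime.exists_mem_finset_dvd hqQ
  have hkh : α k ∣ h := ((hq.prime.associated_of_dvd (hA.prime k)
    (hq.prime.dvd_of_dvd_pow hk)).symm.dvd).trans hqh
  exact hA.sq_not_dvd_det_basis b k
    (hh ▸ sq (α k) ▸ mul_dvd_mul (Finset.dvd_prod_of_mem α (Finset.mem_univ k)) hkh)


theorem sum_exponents_eq (hA : IsCentralArrangement α) {e : Fin l → ℕ}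
    (hfree : IsFreeWithExponents α e) : ∑ i, e i = n := by
  obtain ⟨b, hb⟩ := hfree
  obtain ⟨h, hh⟩ := hA.defPoly_dvd_det _ fun t => (b t).2
  obtain ⟨r, hr, rfl⟩ := isUnit_iff_eq_C_of_isReduced.mp (hA.isUnit_of_det_basis_eq b hh)
  have hQ := isHomogeneous_defPoly hA.homog
  have hdet := isHomogeneous_det _ e fun i j => hb i j
  rw [hh] at hdet
  exact hdet.inj_right (by simpa using hQ.mul (isHomogeneous_C _ r))
    (mul_ne_zero hA.defPoly_ne_zero (C_ne_zero.mpr hr.ne_zero))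

theorem exists_det_eq_C_mul_defPoly (hA : IsCentralArrangement α)
    {δ : Fin l → Fin l → MvPolynomial (Fin l) F} (hδ : ∀ i, δ i ∈ logDer α)
    {e : Fin l → ℕ} (hhom : ∀ i, IsHomogVF (δ i) (e i)) (hsum : ∑ i, e i = n)
    (hdet : (Matrix.of δ).det ≠ 0) :
    ∃ c, c ≠ 0 ∧ (Matrix.of δ).det = C c * defPoly α := by
  obtain ⟨h, hh⟩ := hA.defPoly_dvd_det (Matrix.of δ) hδ
  have h0 : h ≠ 0 := by rintro rfl; exact hdet (by rw [hh, mul_zero])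
  have hdeg : h.totalDegree = 0 := by
    have := (isHomogeneous_det (Matrix.of δ) e hhom).totalDegree hdet
    rw [hh, totalDegree_mul_of_isDomain hA.defPoly_ne_zero h0,
      (isHomogeneous_defPoly hA.homog).totalDegree hA.defPoly_ne_zero, hsum] at this
    omega
  rw [totalDegree_eq_zero_iff_eq_C] at hdeg
  refine ⟨coeff 0 h, fun hc => h0 (by rw [hdeg, hc, map_zero]), ?_⟩
  rw [hh, ← hdeg, mul_comm]

theorem exists_eq_sum_smul_of_det_eq (hA : IsCentralArrangement α)
    {δ : Fin l → Fin l → MvPolynomial (Fin l) F} (hδ : ∀ i, δ i ∈ logDer α)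
    {c : F} (hc : c ≠ 0)
    (hdet : (Matrix.of δ).det = C c * defPoly α) {x : Fin l → MvPolynomial (Fin l) F}
    (hx : x ∈ logDer α) : ∃ u : Fin l → MvPolynomial (Fin l) F, x = ∑ i, u i • δ i := by
  set M := Matrix.of δ
  have hcramer : ∀ i, defPoly α ∣ M.transpose.cramer x i := by
    intro i
    rw [Matrix.cramer_apply, Matrix.updateCol_transpose, Matrix.det_transpose]
    refine hA.defPoly_dvd_det _ fun t => ?_
    rcases eq_or_ne t i with rfl | hti
    · simpa using hx
    · rw [Matrix.updateRow_ne hti]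
      exact hδ t
  choose u hu using hcramer
  refine ⟨fun i => C c⁻¹ * u i, funext fun j => ?_⟩
  have hj := congrFun (Matrix.mulVec_cramer M.transpose x) j
  simp only [Matrix.det_transpose, hdet, Matrix.mulVec, dotProduct, hu, Matrix.transpose_apply,
    Pi.smul_apply, smul_eq_mul] at hj
  have hj' : C c * x j = ∑ i, u i * δ i j := by
    apply mul_left_cancel₀ hA.defPoly_ne_zero
    rw [Finset.mul_sum, ← mul_assoc, mul_comm (defPoly α), ← hj]
    exact Finset.sum_congr rfl fun i _ => by simp only [M, Matrix.of_apply]; ring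
  simp only [Finset.sum_apply, Pi.smul_apply, smul_eq_mul, mul_assoc, ← Finset.mul_sum, ← hj']
  rw [← mul_assoc, ← C_mul, inv_mul_cancel₀ hc, C_1, one_mul]

theorem isFreeWithExponents_of_det_ne_zero (hA : IsCentralArrangement α)
    {δ : Fin l → Fin l → MvPolynomial (Fin l) F} (hδ : ∀ i, δ i ∈ logDer α)
    {e : Fin l → ℕ} (hhom : ∀ i, IsHomogVF (δ i) (e i)) (hsum : ∑ i, e i = n)
    (hdet : (Matrix.of δ).det ≠ 0) :
    IsFreeWithExponents α e := by
  obtain ⟨c, hc, hdetc⟩ := hA.exists_det_eq_C_mul_defPoly hδ hhom hsum hdet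
  let v : Fin l → logDer α := fun i => ⟨δ i, hδ i⟩
  have hli : LinearIndependent (MvPolynomial (Fin l) F) v :=
    .of_comp (logDer α).subtype (Matrix.linearIndependent_rows_of_det_ne_zero hdet)
  have hspan : ⊤ ≤ Submodule.span (MvPolynomial (Fin l) F) (Set.range v) := by
    rintro ⟨x, hx⟩ -
    obtain ⟨u, rfl⟩ := hA.exists_eq_sum_smul_of_det_eq hδ hc hdetc hx
    have hsum_v : (⟨_, hx⟩ : logDer α) = ∑ i, u i • v i := Subtype.ext (by simp [v])
    rw [hsum_v]
    exact Submodule.sum_mem _ fun i _ => Submodule.smul_mem _ _ (Submodule.subset_span ⟨i, rfl⟩)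
  exact ⟨.mk hli hspan, fun i => by simpa [v] using hhom i⟩

end IsCentralArrangement

theorem natCast_dvd_of_modP_eq_zero {p : ℕ} {f : MvPolynomial (Fin l) ℤ} (h : modP p f = 0) :
    (p : MvPolynomial (Fin l) ℤ) ∣ f := by
  have hmem : f ∈ RingHom.ker (map (Int.castRingHom (ZMod p)) :
      MvPolynomial (Fin l) ℤ →+* MvPolynomial (Fin l) (ZMod p)) := h
  rw [ker_map, ZMod.ker_intCastRingHom, Ideal.map_span, Set.image_singleton,
    Ideal.mem_span_singleton] at hmem
  simpa using hmem

theorem mem_jacobianIdealZ_iff {α : Fin n → MvPolynomial (Fin l) ℤ}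
    {f : MvPolynomial (Fin l) ℤ} :
    f ∈ jacobianIdealZ α ↔ ∃ a c, f = a * defPoly α + derApply c (defPoly α) := by
  simp only [jacobianIdealZ, Set.singleton_union, Ideal.mem_span_insert,
    Submodule.mem_span_range_iff_exists_fun, derApply, smul_eq_mul]
  constructor
  · rintro ⟨a, z, ⟨c, rfl⟩, rfl⟩
    exact ⟨a, c, rfl⟩
  · rintro ⟨a, c, rfl⟩
    exact ⟨a, _, ⟨c, rfl⟩, rfl⟩

theorem exists_lift_dvd_derApply {α : Fin n → MvPolynomial (Fin l) ℤ} {p : ℕ}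
    (hnzd : ∀ f : MvPolynomial (Fin l) ℤ,
      (p : MvPolynomial (Fin l) ℤ) * f ∈ jacobianIdealZ α → f ∈ jacobianIdealZ α)
    {δbar : Fin l → MvPolynomial (Fin l) (ZMod p)}
    (h : defPoly (fun i => modP p (α i)) ∣ derApply δbar (defPoly fun i => modP p (α i))) :
    ∃ δ : Fin l → MvPolynomial (Fin l) ℤ,
      (∀ j, modP p (δ j) = δbar j) ∧ defPoly α ∣ derApply δ (defPoly α) := by
  have hsurj := map_surjective (σ := Fin l) (Int.castRingHom (ZMod p)) ZMod.intCast_surjective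
  choose θ hθ using fun j => hsurj (δbar j)
  obtain ⟨gbar, hgbar⟩ := h
  obtain ⟨g, rfl⟩ := hsurj gbar
  obtain ⟨r, hr⟩ :
      (p : MvPolynomial (Fin l) ℤ) ∣ derApply θ (defPoly α) - defPoly α * g := by
    refine natCast_dvd_of_modP_eq_zero ?_
    simp only [modP] at hθ hgbar ⊢
    rw [map_sub, ← derApply_map, funext hθ, ← defPoly_map, map_mul, hgbar, defPoly_map,
      sub_self]
  obtain ⟨a, c, hac⟩ := mem_jacobianIdealZ_iff.mp
    (hnzd r (mem_jacobianIdealZ_iff.mpr ⟨-g, θ, by rw [← hr]; ring⟩))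
  refine ⟨θ - (p : MvPolynomial (Fin l) ℤ) • c, fun j => ?_, g + p * a, ?_⟩
  · simp [modP, hθ]
  · rw [derApply_sub, derApply_smul]
    linear_combination hr + (p : MvPolynomial (Fin l) ℤ) * hac

theorem IsGoodPrime.isCentralArrangement_modP {α : Fin n → MvPolynomial (Fin l) ℤ} {p : ℕ}
    (hgood : IsGoodPrime α p) (hα : ∀ i, (α i).IsHomogeneous 1) :
    IsCentralArrangement fun i => modP p (α i) := by
  have : Fact p.Prime := ⟨hgood.1⟩
  set αp := fun i => modP p (α i)
  have hsfp : Squarefree (defPoly αp) := by simpa only [αp, modP, defPoly_map] using hgood.2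
  have hhom : ∀ i, (αp i).IsHomogeneous 1 := fun i => (hα i).map _
  have h0 : ∀ i, αp i ≠ 0 := fun i h =>
    hsfp.ne_zero (Finset.prod_eq_zero (Finset.mem_univ i) h)
  refine ⟨hhom, h0, fun i j hij r hr => ?_⟩
  have hdvd : αp j * αp j ∣ defPoly αp :=
    calc αp j * αp j ∣ αp i * αp j :=
          mul_dvd_mul_right ⟨C r, by rw [hr, smul_eq_C_mul, mul_comm]⟩ _
      _ ∣ defPoly αp := by
          rw [← Finset.prod_pair hij]
          exact Finset.prod_dvd_prod_of_subset _ _ _ (Finset.subset_univ _)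
  exact (prime_of_isHomogeneous_one (hhom j) (h0 j)).not_isUnit (hsfp _ hdvd)

theorem IsIntegralArrangement.isCentralArrangement_map {α : Fin n → MvPolynomial (Fin l) ℤ}
    (hA : IsIntegralArrangement α) :
    IsCentralArrangement fun i => map (Int.castRingHom ℚ) (α i) :=
  ⟨fun i => (hA.homog i).map _,
    fun i h => hA.nonzero i (map_injective _ Int.cast_injective (by simpa using h)), hA.distinct⟩

theorem exists_isHomogVF_lift {α : Fin n → MvPolynomial (Fin l) ℤ} {p : ℕ}
    (hAq : IsCentralArrangement fun i => map (Int.castRingHom ℚ) (α i))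
    (hnzd : ∀ f : MvPolynomial (Fin l) ℤ,
      (p : MvPolynomial (Fin l) ℤ) * f ∈ jacobianIdealZ α → f ∈ jacobianIdealZ α)
    {δbar : Fin l → MvPolynomial (Fin l) (ZMod p)}
    (hδbar : δbar ∈ logDer fun i => modP p (α i)) {d : ℕ} (hd : IsHomogVF δbar d) :
    ∃ δ : Fin l → MvPolynomial (Fin l) ℤ,
      (∀ j, modP p (δ j) = δbar j) ∧ IsHomogVF δ d ∧
      (fun j => map (Int.castRingHom ℚ) (δ j)) ∈
        logDer fun i => map (Int.castRingHom ℚ) (α i) := by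
  obtain ⟨δ, hδp, hδQ⟩ := exists_lift_dvd_derApply hnzd (defPoly_dvd_derApply hδbar)
  refine ⟨fun j => homogeneousComponent d (δ j), fun j => ?_,
    fun j => homogeneousComponent_isHomogeneous d _, ?_⟩
  · rw [modP, ← homogeneousComponent_map, ← modP, hδp, homogeneousComponent_eq_self (hd j)]
  · simp_rw [← homogeneousComponent_map]
    refine homogeneousComponent_mem_logDer hAq.homog (hAq.mem_logDer_of_dvd ?_) d
    rw [defPoly_map, derApply_map]
    exact map_dvd _ hδQ

theorem isFree_of_isFree_modP_general {l n : ℕ} (α : Fin n → MvPolynomial (Fin l) ℤ)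
    (hA : IsIntegralArrangement α) (p : ℕ) (hgood : IsGoodPrime α p)
    (hnzd : ∀ f : MvPolynomial (Fin l) ℤ,
      (p : MvPolynomial (Fin l) ℤ) * f ∈ jacobianIdealZ α → f ∈ jacobianIdealZ α)
    (e : Fin l → ℕ) (hfree : IsFreeWithExponents (fun i => modP p (α i)) e) :
    IsFreeWithExponents (fun i => MvPolynomial.map (Int.castRingHom ℚ) (α i)) e := by
  have : Fact p.Prime := ⟨hgood.1⟩
  have hAp := hgood.isCentralArrangement_modP hA.homog
  have hAq := hA.isCentralArrangement_map
  have hsum := hAp.sum_exponents_eq hfree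
  obtain ⟨b, hb⟩ := hfree
  choose δ hδp hδhom hδq using fun i => exists_isHomogVF_lift hAq hnzd (b i).2 (hb i)
  refine hAq.isFreeWithExponents_of_det_ne_zero hδq (fun i j => (hδhom i j).map _) hsum ?_
  have hdetp : modP p (Matrix.of δ).det = (Matrix.of fun i => (b i : Fin l → _)).det := by
    rw [modP, RingHom.map_det]
    exact congrArg Matrix.det (Matrix.ext fun i j => hδp i j)
  have hdetZ : (Matrix.of δ).det ≠ 0 := fun h =>
    hAp.det_basis_ne_zero b (by rw [← hdetp, h, modP, map_zero])
  have hdetQ : (Matrix.of fun i j => map (Int.castRingHom ℚ) (δ i j)).det =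
      map (Int.castRingHom ℚ) (Matrix.of δ).det :=
    ((map (Int.castRingHom ℚ)).map_det _).symm
  rw [hdetQ, map_ne_zero_iff _ (map_injective _ Int.cast_injective)]
  exact hdetZ

/-- **From characteristic `p` to characteristic `0`.** Let `p` be a good prime for `A`
not dividing `n` and a non-zero divisor on `ℤ[x_1,…,x_l]/J(A)_ℤ`. If `A_p` is free in
`𝔽_p^l` with exponents `(e_1, …, e_l)`, then `A` is free in `ℚ^l` with the same
exponents. -/
theorem isFree_of_isFree_modP {l n : ℕ} (α : Fin n → MvPolynomial (Fin l) ℤ)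
    (hA : IsIntegralArrangement α) (p : ℕ) (hgood : IsGoodPrime α p)
    (hnd : ¬ (p ∣ n))
    (hnzd : ∀ f : MvPolynomial (Fin l) ℤ,
      (p : MvPolynomial (Fin l) ℤ) * f ∈ jacobianIdealZ α → f ∈ jacobianIdealZ α)
    (e : Fin l → ℕ) (hfree : IsFreeWithExponents (fun i => modP p (α i)) e) :
    IsFreeWithExponents (fun i => MvPolynomial.map (Int.castRingHom ℚ) (α i)) e :=
  isFree_of_isFree_modP_general α hA p hgood hnzd e hfree

end HApaper
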